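/- arXiv:2010.13010 — 3 statements merged into one kernel-verified Lean document; each statement's English description precedes it below -/
import Mathlib

section
/- Let c be a positive integer and define f : ℕ → ℝ by f 0 = 0, f 1 = c, f (n+2) = 3*c*f(n+1) - f n. Then for all n ≥ 1, 3 * (f n)^2 ≥ f (2*n), with equality if and only if n = 1. -/
theorem markov_seq_triangle (c : ℕ) (hc : 1 ≤ c) (f : ℕ → ℝ)
    (h0 : f 0 = 0) (h1 : f 1 = c)
    (hrec : ∀ n, f (n+2) = 3*c*f (n+1) - f n) :
    ∀ n : ℕ, 1 ≤ n → (3 * (f n)^2 ≥ f (2*n) ∧ (3 * (f n)^2 = f (2*n) ↔ n = 1)) := by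
  have hcR : (1:ℝ) ≤ c := by exact_mod_cast hc
  have pos : ∀ n, 0 ≤ f n ∧ f n < f (n+1) := by
    intro n
    induction n with
    | zero =>
      refine ⟨le_of_eq h0.symm, ?_⟩
      rw [h0, h1]; linarith
    | succ k ih =>
      obtain ⟨ha, hb⟩ := ih
      refine ⟨by linarith, ?_⟩
      rw [hrec k]
      nlinarith
  have addf : ∀ m n : ℕ, (c:ℝ) * f (m+n+1) = f (m+1) * f (n+1) - f m * f n := by
    intro m
    induction m using Nat.twoStepInduction with
    | zero => intro n; simp only [Nat.zero_add, h0, h1]; ring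
    | one =>
      intro n
      have h2 : f 2 = 3*c*f 1 - f 0 := hrec 0
      rw [show 1+n+1 = n+2 by ring, hrec n, h2, h0, h1]
      ring
    | more k ih1 ih2 =>
      intro n
      have e1 := ih1 n
      have e2 := ih2 n
      rw [show k+1+n+1 = k+n+1+1 by ring, show k+1+1 = k+2 by ring] at e2
      have h3 := hrec (k+1)
      have h2 := hrec k
      rw [show k+2+n+1 = (k+n+1)+2 by ring, hrec (k+n+1),
        show k+1+2 = k+3 by ring] at *
      rw [show k+1+1 = k+2 by ring] at h3
      rw [show k+2+1 = k+3 by ring]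
      linear_combination 3*(c:ℝ)*e2 - e1 - f (n+1) * h3 + f n * h2
  intro n hn
  obtain ⟨k, rfl⟩ : ∃ k, n = k + 1 := ⟨n-1, (Nat.succ_pred_eq_of_pos hn).symm⟩
  have e := addf k (k+1)
  rw [show k+1+1 = k+2 by ring] at e
  have h2 := hrec k
  have key : (c:ℝ) * (3 * f (k+1)^2 - f (2*(k+1))) = 2 * f (k+1) * f k := by
    rw [show 2*(k+1) = k+(k+1)+1 by ring]
    linear_combination -e - f (k+1) * h2
  have hfk : 0 ≤ f k := (pos k).1
  have hfk1 : 0 < f (k+1) := lt_of_le_of_lt hfk (pos k).2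
  have hcpos : (0:ℝ) < c := by linarith
  constructor
  · nlinarith
  · constructor
    · intro heq
      have : 2 * f (k+1) * f k = 0 := by rw [← key, heq]; ring
      have hfk0 : f k = 0 := by
        rcases mul_eq_zero.mp this with h | h
        · exfalso; rcases mul_eq_zero.mp h with h' | h' <;> [linarith; linarith]
        · exact h
      rcases Nat.eq_zero_or_pos k with rfl | hk
      · rfl
      · exfalso
        obtain ⟨j, rfl⟩ : ∃ j, k = j + 1 := ⟨k-1, (Nat.succ_pred_eq_of_pos hk).symm⟩
        have := lt_of_le_of_lt (pos j).1 (pos j).2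
        linarith
    · rintro h
      have hk0 : k = 0 := by omega
      subst hk0
      have : f 0 = 0 := h0
      nlinarith [key]
end

section
/- The real number 3^15 * ((2-√2)/4)^15 * (3+√8)^7 is strictly greater than 1. -/
theorem key_numerical_inequality :
    (1 : ℝ) < 3^15 * ((2 - Real.sqrt 2)/4)^15 * (3 + Real.sqrt 8)^7 := by
  set s := Real.sqrt 2 with hs_def
  have hs : s^2 = 2 := Real.sq_sqrt (by norm_num)
  have h8 : Real.sqrt 8 = 2 * s := by
    rw [show (8:ℝ) = 2^2 * 2 by norm_num, Real.sqrt_mul (by positivity), Real.sqrt_sq (by norm_num)]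
  have hbound : s < 20309206/14348907 := by
    rw [hs_def]
    rw [show (20309206:ℝ)/14348907 = Real.sqrt (((20309206:ℝ)/14348907)^2) by
      rw [Real.sqrt_sq (by norm_num)]]
    apply Real.sqrt_lt_sqrt (by norm_num)
    norm_num
  have key : ((2 - s)/4)^15 * (3 + 2*s)^7 = (2 - s)/2^23 := by
    linear_combination (((-279935:ℝ)/8388608) * s^0 + ((1586303:ℝ)/16777216) * s^1 + ((-606527:ℝ)/16777216) * s^2 + ((-5126977:ℝ)/33554432) * s^3 + ((6076513:ℝ)/33554432) * s^4 + ((2523743:ℝ)/67108864) * s^5 + ((-11965007:ℝ)/67108864) * s^6 + ((9896623:ℝ)/134217728) * s^7 + ((8403913:ℝ)/134217728) * s^8 + ((-17155577:ℝ)/268435456) * s^9 + ((1115541:ℝ)/268435456) * s^10 + ((10121491:ℝ)/536870912) * s^11 + ((-4633293:ℝ)/536870912) * s^12 + ((-990799:ℝ)/1073741824) * s^13 + ((1036461:ℝ)/536870912) * s^14 + ((-145715:ℝ)/268435456) * s^15 + ((-6511:ℝ)/134217728) * s^16 + ((4547:ℝ)/67108864) * s^17 + ((-617:ℝ)/33554432)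 * s^18 + ((39:ℝ)/16777216) * s^19 + ((-1:ℝ)/8388608) * s^20) * hs
  rw [h8]
  calc (1:ℝ) = 3^15 * ((2 - 20309206/14348907)/2^23) := by norm_num
    _ < 3^15 * ((2 - s)/2^23) := by
        apply mul_lt_mul_of_pos_left _ (by positivity)
        linarith
    _ = 3^15 * (((2 - s)/4)^15 * (3 + 2*s)^7) := by rw [key]
    _ = 3^15 * ((2 - s)/4)^15 * (3 + 2*s)^7 := by ring
end

section
/- Every Markov triple can be obtained from (1,1,1) by a finite sequence of Vieta involutions (replacing one coordinate m_i by 3*m_j*m_k - m_i) and permutations of coordinates. -/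
/-- One step in the Markov tree: a Vieta involution on one coordinate,
or a transposition of two coordinates (transpositions generate all permutations). -/
def MarkovStep : ℤ × ℤ × ℤ → ℤ × ℤ × ℤ → Prop :=
  fun t t' =>
    t' = (3 * t.2.1 * t.2.2 - t.1, t.2.1, t.2.2) ∨
    t' = (t.1, 3 * t.1 * t.2.2 - t.2.1, t.2.2) ∨
    t' = (t.1, t.2.1, 3 * t.1 * t.2.1 - t.2.2) ∨
    t' = (t.2.1, t.1, t.2.2) ∨
    t' = (t.1, t.2.2, t.2.1)

/-- Key descent lemma: if `(a, b, c)` is a positive Markov triple with `c` maximal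
and the triple is not `(1,1,1)`, then the Vieta involution on `c` produces a strictly
smaller positive Markov triple. -/
lemma markov_key (a b c : ℤ) (ha : 0 < a) (hb : 0 < b) (hc : 0 < c)
    (hac : a ≤ c) (hbc : b ≤ c)
    (h : a^2 + b^2 + c^2 = 3*a*b*c)
    (hne : ¬(a = 1 ∧ b = 1 ∧ c = 1)) :
    0 < 3*a*b - c ∧ 3*a*b - c < c ∧
      a^2 + b^2 + (3*a*b-c)^2 = 3*a*b*(3*a*b-c) := by
  have hcc : c * (3*a*b - c) = a^2 + b^2 := by nlinarith
  have hpos : 0 < 3*a*b - c := by nlinarith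
  refine ⟨hpos, ?_, by nlinarith⟩
  by_contra h'
  push_neg at h'
  have ha' : a ≤ 3*a*b - c := le_trans hac h'
  have hb' : b ≤ 3*a*b - c := le_trans hbc h'
  have fa : 0 ≤ (c - a) * ((3*a*b - c) - a) :=
    mul_nonneg (by linarith) (by linarith)
  have fb : 0 ≤ (c - b) * ((3*a*b - c) - b) :=
    mul_nonneg (by linarith) (by linarith)
  have fa' : 0 ≤ 2*a^2 + b^2 - 3*a^2*b := by nlinarith
  have fb' : 0 ≤ a^2 + 2*b^2 - 3*a*b^2 := by nlinarith
  have ha1 : a = 1 := by nlinarith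
  have hb1 : b = 1 := by nlinarith
  subst ha1; subst hb1
  have hc1 : c = 1 := by nlinarith
  exact hne ⟨rfl, rfl, hc1⟩

/-- Every positive Markov triple is reachable from `(1,1,1)`, by strong induction
on the sum of the coordinates. -/
lemma markov_aux : ∀ (n : ℕ) (a b c : ℤ), 0 < a → 0 < b → 0 < c →
    a^2 + b^2 + c^2 = 3*a*b*c → (a + b + c).natAbs ≤ n →
    Relation.ReflTransGen MarkovStep (1, 1, 1) (a, b, c) := by
  intro n
  induction n with
  | zero => intro a b c ha hb hc h hs; omega
  | succ n ih =>
    intro a b c ha hb hc h hs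
    by_cases htriv : a = 1 ∧ b = 1 ∧ c = 1
    · obtain ⟨rfl, rfl, rfl⟩ := htriv
      exact Relation.ReflTransGen.refl
    rcases le_total a b with hab | hab
    · rcases le_total b c with hbc | hbc
      · -- c is max
        obtain ⟨h1, h2, h3⟩ := markov_key a b c ha hb hc (hab.trans hbc) hbc h htriv
        refine (ih a b (3*a*b - c) ha hb h1 h3 (by omega)).tail ?_
        right; right; left
        show (a, b, c) = (a, b, 3*a*b - (3*a*b - c))
        norm_num
      · -- b is max
        obtain ⟨h1, h2, h3⟩ := markov_key a c b ha hc hb hab hbc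
          (by linear_combination h) (by tauto)
        refine (ih a (3*a*c - b) c ha h1 hc (by linear_combination h3) (by omega)).tail ?_
        right; left
        show (a, b, c) = (a, 3*a*c - (3*a*c - b), c)
        norm_num
    · rcases le_total a c with hac | hac
      · -- c is max
        obtain ⟨h1, h2, h3⟩ := markov_key a b c ha hb hc hac (hab.trans hac) h htriv
        refine (ih a b (3*a*b - c) ha hb h1 h3 (by omega)).tail ?_
        right; right; left
        show (a, b, c) = (a, b, 3*a*b - (3*a*b - c))
        norm_num
      · -- a is max
        obtain ⟨h1, h2, h3⟩ := markov_key b c a hb hc ha hab hac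
          (by linear_combination h) (by tauto)
        refine (ih (3*b*c - a) b c h1 hb hc (by linear_combination h3) (by omega)).tail ?_
        left
        show (a, b, c) = (3*b*c - (3*b*c - a), b, c)
        norm_num

theorem markov_tree (m1 m2 m3 : ℤ) (h1 : 0 < m1) (h2 : 0 < m2) (h3 : 0 < m3)
    (h : m1^2 + m2^2 + m3^2 = 3*m1*m2*m3) :
    Relation.ReflTransGen MarkovStep (1, 1, 1) (m1, m2, m3) := by
  exact markov_aux (m1 + m2 + m3).natAbs m1 m2 m3 h1 h2 h3 h le_rfl
end
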